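/- arXiv:1904.10585 — 3 statements merged into one kernel-verified Lean document; each statement's English description precedes it below -/
import Mathlib

section
/- For every ε > 0 and every positive integer d, the Chebyshev polynomial of the first kind satisfies T_d(1+ε) ≥ 2^(d·min{√ε, 1} − 1). -/
/-! Put `1 + ε = cosh θ`. Then `T_d(1 + ε) = cosh (dθ) ≥ e^{dθ} / 2`, and
`e^θ = (1 + ε) + √((1 + ε)² - 1) ≥ 1 + √ε ≥ 1 + m ≥ 2^m` for `m = min(√ε, 1) ∈ [0, 1]`,
the last step by convexity of `p ↦ 2^p` on `[0, 1]`. -/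

open Polynomial Real

namespace Polynomial.Chebyshev

theorem add_sqrt_sq_sub_one_pow_div_two_le_eval_T {x : ℝ} (hx : 1 ≤ x) (n : ℕ) :
    (x + √(x ^ 2 - 1)) ^ n / 2 ≤ (T ℝ n).eval x := by
  have hexp : exp (n * arcosh x) = (x + √(x ^ 2 - 1)) ^ n := by
    rw [exp_nat_mul, exp_arcosh hx]
  have hT : (T ℝ n).eval x = cosh (n * arcosh x) := by
    simpa [cosh_arcosh hx] using T_real_cosh (arcosh x) n
  rw [hT, cosh_eq, ← hexp]
  linarith [exp_pos (-(n * arcosh x))]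

end Polynomial.Chebyshev

theorem two_rpow_le_one_add {p : ℝ} (hp0 : 0 ≤ p) (hp1 : p ≤ 1) : (2 : ℝ) ^ p ≤ 1 + p := by
  simpa [one_add_one_eq_two] using rpow_one_add_le_one_add_mul_self (s := 1) (by norm_num) hp0 hp1

theorem one_add_sqrt_le_add_sqrt_sq_sub_one {ε : ℝ} (hε : 0 ≤ ε) :
    1 + √ε ≤ (1 + ε) + √((1 + ε) ^ 2 - 1) := by
  have : √ε ≤ √((1 + ε) ^ 2 - 1) := sqrt_le_sqrt (by nlinarith)
  linarith

theorem chebyshev_lower_bound_general (ε : ℝ) (hε : 0 < ε) (d : ℕ) :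
    (Polynomial.Chebyshev.T ℝ d).eval (1 + ε) ≥
      (2 : ℝ) ^ ((d : ℝ) * min (Real.sqrt ε) 1 - 1) := by
  set m := min √ε 1
  have hm0 : 0 ≤ m := le_min (sqrt_nonneg ε) zero_le_one
  have hbase : (2 : ℝ) ^ m ≤ (1 + ε) + √((1 + ε) ^ 2 - 1) :=
    calc (2 : ℝ) ^ m ≤ 1 + m := two_rpow_le_one_add hm0 (min_le_right _ _)
      _ ≤ 1 + √ε := by gcongr; exact min_le_left _ _
      _ ≤ _ := one_add_sqrt_le_add_sqrt_sq_sub_one hε.le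
  calc (2 : ℝ) ^ ((d : ℝ) * m - 1) = ((2 : ℝ) ^ m) ^ d / 2 := by
        rw [rpow_sub two_pos, rpow_one, mul_comm, rpow_mul zero_le_two, rpow_natCast]
    _ ≤ ((1 + ε) + √((1 + ε) ^ 2 - 1)) ^ d / 2 := by gcongr
    _ ≤ (Chebyshev.T ℝ d).eval (1 + ε) :=
        Chebyshev.add_sqrt_sq_sub_one_pow_div_two_le_eval_T (by linarith) d

/-- For every `ε > 0` and positive integer `d`, the Chebyshev polynomial of the first
kind satisfies `T_d(1+ε) ≥ 2^(d·min{√ε, 1} − 1)`. -/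
theorem chebyshev_lower_bound (ε : ℝ) (hε : 0 < ε) (d : ℕ) (hd : 0 < d) :
    (Polynomial.Chebyshev.T ℝ d).eval (1 + ε) ≥
      (2 : ℝ) ^ ((d : ℝ) * min (Real.sqrt ε) 1 - 1) :=
  chebyshev_lower_bound_general ε hε d
end

section
/- Let T be a firmly nonexpansive operator on a real Hilbert space and let a sequence satisfy Z^{k+1} = T(Z^k) + E^k with errors E^k. Define W^k = T(Z^k) − Z^k. Then for every k, ‖W^{k+1}‖² ≤ ‖W^k‖² + ‖E^k‖². -/
/-!
Firm nonexpansiveness says `⟪u, v⟫ ≥ 0` for `u = T x - T y` and `v = (x - T x) - (y - T y)`.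
For `x = T y + e` one has `u - e = T x - x` and `u + v - e = T y - y`, and
`‖u + v - e‖² + ‖e‖² - ‖u - e‖² = 2 ⟪u, v⟫ + ‖v - e‖² ≥ 0`.
-/

open scoped RealInnerProductSpace

section FirmlyNonexpansive

variable {H : Type*} [NormedAddCommGroup H] [InnerProductSpace ℝ H]

theorem norm_sub_sq_le_norm_add_sub_sq_add_sq_of_inner_nonneg {u v : H} (huv : 0 ≤ ⟪u, v⟫)
    (e : H) : ‖u - e‖ ^ 2 ≤ ‖u + v - e‖ ^ 2 + ‖e‖ ^ 2 := by
  have hsplit : ‖u + v - e‖ ^ 2 = ‖u - e‖ ^ 2 + 2 * ⟪u - e, v⟫ + ‖v‖ ^ 2 := by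
    rw [show u + v - e = (u - e) + v by abel, norm_add_sq_real]
  have hslack : 0 ≤ ‖v - e‖ ^ 2 := sq_nonneg _
  rw [norm_sub_sq_real] at hslack
  rw [hsplit, inner_sub_left, real_inner_comm v e]
  linarith

variable {T : H → H}

theorem inner_sub_apply_nonneg_of_firmlyNonexpansive
    (hT : ∀ x y : H, ‖T x - T y‖ ^ 2 ≤ ⟪T x - T y, x - y⟫)
    (x y : H) : 0 ≤ ⟪T x - T y, (x - y) - (T x - T y)⟫ := by
  rw [inner_sub_right, real_inner_self_eq_norm_sq]
  linarith [hT x y]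

theorem norm_residual_sq_le_of_firmlyNonexpansive
    (hT : ∀ x y : H, ‖T x - T y‖ ^ 2 ≤ ⟪T x - T y, x - y⟫)
    (y e : H) : ‖T (T y + e) - (T y + e)‖ ^ 2 ≤ ‖T y - y‖ ^ 2 + ‖e‖ ^ 2 := by
  set x := T y + e
  have key := norm_sub_sq_le_norm_add_sub_sq_add_sq_of_inner_nonneg
    (inner_sub_apply_nonneg_of_firmlyNonexpansive hT x y) e
  have hnew : T x - T y - e = T x - x := by simp only [x]; abel
  have hold : T x - T y + (x - y - (T x - T y)) - e = T y - y := by simp only [x]; abel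
  rwa [hnew, hold] at key

end FirmlyNonexpansive

/-- Let `T` be firmly nonexpansive on a real Hilbert space and let
`Z^{k+1} = T(Z^k) + E^k`. With `W^k = T(Z^k) − Z^k`, for every `k`,
`‖W^{k+1}‖² ≤ ‖W^k‖² + ‖E^k‖²`. -/
theorem inexact_fixed_point_residual_bound {H : Type*} [NormedAddCommGroup H]
    [InnerProductSpace ℝ H] (T : H → H)
    (hT : ∀ x y : H, ‖T x - T y‖ ^ 2 ≤ inner ℝ (T x - T y) (x - y))
    (Z E : ℕ → H) (hZ : ∀ k, Z (k + 1) = T (Z k) + E k) :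
    ∀ k, ‖T (Z (k + 1)) - Z (k + 1)‖ ^ 2 ≤ ‖T (Z k) - Z k‖ ^ 2 + ‖E k‖ ^ 2 := by
  intro k
  rw [hZ k]
  exact norm_residual_sq_le_of_firmlyNonexpansive hT (Z k) (E k)
end

section
/- Let h = F + R with F convex differentiable with L-Lipschitz gradient and R convex, let x* minimize h, and let x⁺ = prox_{τR}(x − τ(∇F(x) + e)) with 0 < τ ≤ 1/L. Then h(x⁺) − h(x*) ≤ (1/(2τ))(‖x − x*‖² − ‖x⁺ − x*‖²) + ‖e‖ · ‖x⁺ − x*‖. -/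
/-!
Write `z = x - τ (∇F x + e)`. Since `x⁺` minimizes the convex function `R` plus the smooth
quadratic `‖· - z‖² / (2τ)`, it satisfies the variational inequality
`R x⁺ - R x* ≤ τ⁻¹ ⟪x⁺ - z, x* - x⁺⟫`: along the segment from `x⁺` to `x*` convexity bounds the
increase of `R` by that of the quadratic, and the slope of the quadratic tends to its derivative.
The same first-order condition for `F + (-F)` is the gradient inequality
`F x + ⟪∇F x, x* - x⟫ ≤ F x*`, and the Lipschitz gradient gives the descent lemma
`F x⁺ ≤ F x + ⟪∇F x, x⁺ - x⟫ + (L/2) ‖x⁺ - x‖²` with `L ≤ 1/τ`. Adding the three, the gradient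
terms cancel, the quadratic terms assemble into `(‖x - x*‖² - ‖x⁺ - x*‖²) / (2τ)` by expanding
`‖x - x*‖² = ‖(x⁺ - x) + (x* - x⁺)‖²`, and the error contributes `⟪e, x* - x⁺⟫ ≤ ‖e‖ ‖x⁺ - x*‖`.
-/

open Set
open scoped RealInnerProductSpace

section Normed

variable {E : Type*} [NormedAddCommGroup E] [NormedSpace ℝ E]

theorem ConvexOn.sub_le_of_isMinOn_add {s : Set E} {R φ : E → ℝ} {φ' : E →L[ℝ] ℝ} {p y : E}
    (hR : ConvexOn ℝ s R) (hφ : HasFDerivAt φ φ' p)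
    (hmin : IsMinOn (fun u ↦ R u + φ u) s p) (hp : p ∈ s) (hy : y ∈ s) :
    R p - R y ≤ φ' (y - p) := by
  set g : ℝ → ℝ := fun t ↦ φ (p + t • (y - p))
  have hline : HasDerivAt (fun t : ℝ ↦ p + t • (y - p)) (y - p) 0 := by
    simpa using ((hasDerivAt_id (0 : ℝ)).smul_const (y - p)).const_add p
  have hg : HasDerivAt g (φ' (y - p)) 0 := hφ.comp_hasDerivAt_of_eq 0 hline (by simp)
  refine ge_of_tendsto (by simpa using hg.tendsto_slope_zero_right) ?_
  filter_upwards [Ioc_mem_nhdsGT (zero_lt_one' ℝ)] with t ⟨ht0, ht1⟩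
  have hseg : p + t • (y - p) = (1 - t) • p + t • y := by module
  have hconv : R (p + t • (y - p)) ≤ (1 - t) * R p + t * R y := by
    simpa [hseg] using hR.2 hp hy (by linarith) ht0.le (by ring)
  have hmin_t : R p + φ p ≤ R (p + t • (y - p)) + φ (p + t • (y - p)) :=
    hmin (hseg ▸ hR.1 hp hy (by linarith) ht0.le (by ring))
  rw [le_inv_mul_iff₀ ht0]
  simp only [g, zero_smul, add_zero]
  linarith

end Normed

section InnerProduct

variable {E : Type*} [NormedAddCommGroup E] [InnerProductSpace ℝ E]

theorem HasGradientAt.hasDerivAt_comp_add_smul [CompleteSpace E] {F : E → ℝ} {g x d : E}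
    {t : ℝ} (h : HasGradientAt F g (x + t • d)) :
    HasDerivAt (fun s : ℝ ↦ F (x + s • d)) ⟪g, d⟫ t := by
  have hline : HasDerivAt (fun s : ℝ ↦ x + s • d) d t := by
    simpa using ((hasDerivAt_id t).smul_const d).const_add x
  simpa [Function.comp_def] using (hasGradientAt_iff_hasFDerivAt.mp h).comp_hasDerivAt t hline

theorem ConvexOn.add_inner_le_of_hasGradientAt [CompleteSpace E] {s : Set E} {F : E → ℝ}
    {g x y : E} (hF : ConvexOn ℝ s F) (hg : HasGradientAt F g x) (hx : x ∈ s) (hy : y ∈ s) :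
    F x + ⟪g, y - x⟫ ≤ F y := by
  have hmin : IsMinOn (fun u ↦ F u + -F u) s x := fun u _ ↦ by simp
  have := hF.sub_le_of_isMinOn_add (hasGradientAt_iff_hasFDerivAt.mp hg).neg hmin hx hy
  rw [neg_apply, InnerProductSpace.toDual_apply_apply] at this
  linarith

theorem ConvexOn.sub_le_inner_of_isMinOn_add_sq {s : Set E} {R : E → ℝ} {c : ℝ} {z p y : E}
    (hR : ConvexOn ℝ s R) (hmin : IsMinOn (fun u ↦ R u + c * ‖u - z‖ ^ 2) s p)
    (hp : p ∈ s) (hy : y ∈ s) :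
    R p - R y ≤ 2 * c * ⟪p - z, y - p⟫ := by
  have hsq : HasFDerivAt (fun u ↦ c * ‖u - z‖ ^ 2)
      (c • (2 • (innerSL ℝ (p - z)).comp (ContinuousLinearMap.id ℝ E))) p :=
    (((hasFDerivAt_id p).sub_const z).norm_sq).const_mul c
  calc R p - R y ≤ _ := hR.sub_le_of_isMinOn_add hsq hmin hp hy
    _ = 2 * c * ⟪p - z, y - p⟫ := by simp [inner_sub_left]; ring

theorem sub_sub_inner_le_of_lipschitz_gradient [CompleteSpace E] {F : E → ℝ} {F' : E → E}
    {L : ℝ} (hF : ∀ x, HasGradientAt F (F' x) x) (hLip : ∀ x y, ‖F' x - F' y‖ ≤ L * ‖x - y‖)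
    (x y : E) :
    F y - F x - ⟪F' x, y - x⟫ ≤ L / 2 * ‖y - x‖ ^ 2 := by
  set d := y - x
  set φ : ℝ → ℝ := fun t ↦ F (x + t • d) - t * ⟪F' x, d⟫ - t ^ 2 * (L / 2 * ‖d‖ ^ 2)
  have hφ : ∀ t, HasDerivAt φ (⟪F' (x + t • d), d⟫ - ⟪F' x, d⟫ - 2 * t * (L / 2 * ‖d‖ ^ 2)) t :=
    fun t ↦ by
      have hpow : HasDerivAt (fun s : ℝ ↦ s ^ 2) (2 * t) t := by simpa using hasDerivAt_pow 2 t
      exact (((hF _).hasDerivAt_comp_add_smul).sub ((hasDerivAt_id t).mul_const _)).sub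
        (hpow.mul_const _) |>.congr_deriv (by simp)
  have hanti : AntitoneOn φ (Ici 0) := by
    refine antitoneOn_of_hasDerivWithinAt_nonpos (convex_Ici 0)
      (fun t _ ↦ (hφ t).continuousAt.continuousWithinAt) (fun t _ ↦ (hφ t).hasDerivWithinAt)
      fun t ht ↦ ?_
    rw [interior_Ici, mem_Ioi] at ht
    have hgrad_diff : ⟪F' (x + t • d) - F' x, d⟫ ≤ L * t * ‖d‖ ^ 2 :=
      calc ⟪F' (x + t • d) - F' x, d⟫ ≤ ‖F' (x + t • d) - F' x‖ * ‖d‖ := real_inner_le_norm _ _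
        _ ≤ L * ‖x + t • d - x‖ * ‖d‖ := by gcongr; exact hLip _ _
        _ = L * t * ‖d‖ ^ 2 := by
          rw [add_sub_cancel_left, norm_smul, Real.norm_of_nonneg ht.le]; ring
    rw [inner_sub_left] at hgrad_diff
    linarith
  have h01 := hanti (mem_Ici.2 le_rfl) (mem_Ici.2 zero_le_one) zero_le_one
  simp only [φ, d, zero_smul, add_zero, one_smul, add_sub_cancel, zero_mul, sub_zero, one_mul,
    ne_eq, OfNat.ofNat_ne_zero, not_false_eq_true, zero_pow, one_pow] at h01
  linarith

end InnerProduct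

theorem inexact_prox_grad_descent_bound_general {n : ℕ}
    (F R : EuclideanSpace ℝ (Fin n) → ℝ) (F' : EuclideanSpace ℝ (Fin n) → EuclideanSpace ℝ (Fin n))
    (hFconv : ConvexOn ℝ Set.univ F) (hRconv : ConvexOn ℝ Set.univ R)
    (hgrad : ∀ x, HasGradientAt F (F' x) x)
    (L : ℝ) (hL : 0 < L) (hLip : ∀ x y, ‖F' x - F' y‖ ≤ L * ‖x - y‖)
    (xs : EuclideanSpace ℝ (Fin n))
    (τ : ℝ) (hτ0 : 0 < τ) (hτL : τ ≤ 1 / L)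
    (x e xplus : EuclideanSpace ℝ (Fin n))
    (hprox : ∀ u, R xplus + (1 / (2 * τ)) * ‖xplus - (x - τ • (F' x + e))‖ ^ 2 ≤
      R u + (1 / (2 * τ)) * ‖u - (x - τ • (F' x + e))‖ ^ 2) :
    (F xplus + R xplus) - (F xs + R xs) ≤
      (1 / (2 * τ)) * (‖x - xs‖ ^ 2 - ‖xplus - xs‖ ^ 2) + ‖e‖ * ‖xplus - xs‖ := by
  set c := 1 / (2 * τ)
  have hR := hRconv.sub_le_inner_of_isMinOn_add_sq (isMinOn_univ_iff.mpr hprox)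
    (mem_univ xplus) (mem_univ xs)
  have hF_upper := sub_sub_inner_le_of_lipschitz_gradient hgrad hLip x xplus
  have hF_lower := hFconv.add_inner_le_of_hasGradientAt (hgrad x) (mem_univ x) (mem_univ xs)
  set d := xplus - x
  set w := xs - xplus
  have hLc : L / 2 * ‖d‖ ^ 2 ≤ c * ‖d‖ ^ 2 := by
    have hτL' : τ * L ≤ 1 := by rwa [le_div_iff₀ hL] at hτL
    gcongr
    rw [le_div_iff₀ (by positivity)]
    linarith
  have hprox_inner : 2 * c * ⟪xplus - (x - τ • (F' x + e)), w⟫ =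
      2 * c * ⟪d, w⟫ + ⟪F' x, w⟫ + ⟪e, w⟫ := by
    have hcτ : 2 * c * τ = 1 := by simp only [c]; field_simp
    rw [show xplus - (x - τ • (F' x + e)) = d + τ • (F' x + e) by module, inner_add_left,
      real_inner_smul_left, inner_add_left]
    linear_combination (⟪F' x, w⟫ + ⟪e, w⟫) * hcτ
  have hgrad_split : ⟪F' x, d⟫ + ⟪F' x, w⟫ = ⟪F' x, xs - x⟫ := by
    rw [← inner_add_right]; congr 1; module
  have hthree : ‖x - xs‖ ^ 2 = ‖d‖ ^ 2 + 2 * ⟪d, w⟫ + ‖w‖ ^ 2 := by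
    rw [← norm_add_sq_real, ← norm_neg (d + w)]; congr 2; module
  rw [hthree, show ‖xplus - xs‖ = ‖w‖ from norm_sub_rev _ _]
  have hCS : ⟪e, w⟫ ≤ ‖e‖ * ‖w‖ := real_inner_le_norm e w
  linarith

/-- Let `h = F + R` with `F` convex differentiable with `L`-Lipschitz gradient and `R`
convex, let `x*` minimize `h`, and let `x⁺ = prox_{τR}(x − τ(∇F(x) + e))` with
`0 < τ ≤ 1/L`. Then
`h(x⁺) − h(x*) ≤ (1/(2τ))(‖x − x*‖² − ‖x⁺ − x*‖²) + ‖e‖·‖x⁺ − x*‖`. -/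
theorem inexact_prox_grad_descent_bound {n : ℕ}
    (F R : EuclideanSpace ℝ (Fin n) → ℝ) (F' : EuclideanSpace ℝ (Fin n) → EuclideanSpace ℝ (Fin n))
    (hFconv : ConvexOn ℝ Set.univ F) (hRconv : ConvexOn ℝ Set.univ R)
    (hgrad : ∀ x, HasGradientAt F (F' x) x)
    (L : ℝ) (hL : 0 < L) (hLip : ∀ x y, ‖F' x - F' y‖ ≤ L * ‖x - y‖)
    (xs : EuclideanSpace ℝ (Fin n)) (hmin : ∀ y, F xs + R xs ≤ F y + R y)
    (τ : ℝ) (hτ0 : 0 < τ) (hτL : τ ≤ 1 / L)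
    (x e xplus : EuclideanSpace ℝ (Fin n))
    (hprox : ∀ u, R xplus + (1 / (2 * τ)) * ‖xplus - (x - τ • (F' x + e))‖ ^ 2 ≤
      R u + (1 / (2 * τ)) * ‖u - (x - τ • (F' x + e))‖ ^ 2) :
    (F xplus + R xplus) - (F xs + R xs) ≤
      (1 / (2 * τ)) * (‖x - xs‖ ^ 2 - ‖xplus - xs‖ ^ 2) + ‖e‖ * ‖xplus - xs‖ :=
  inexact_prox_grad_descent_bound_general F R F' hFconv hRconv hgrad L hL hLip xs τ hτ0 hτL x e
    xplus hprox
end
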